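/- arXiv:1905.07494 — 5 statements merged into one kernel-verified Lean document; each statement's English description precedes it below -/
import Mathlib

section
/- Let G = H⟨a⟩ where H is a normal nilpotent subgroup of nilpotency class c and a is an n-Engel element of G (i.e., [x, a, a, ..., a] = 1 with a repeated n times, for all x ∈ G). Then G is nilpotent of class at most cn. -/
/-- The left-normed iterated commutator `[x, g, g, ..., g]` with `g` repeated `n` times,
using the convention `[a, b] = a⁻¹ * b⁻¹ * a * b`. -/
def engel {G : Type*} [Group G] (x g : G) : ℕ → G
  | 0 => x
  | n + 1 => (engel x g n)⁻¹ * g⁻¹ * engel x g n * g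

open QuotientGroup
open scoped commutatorElement

/-!
Write `ζ k` for the upper central series of `G`. If `x` commutes with `H` modulo `ζ m` and
`[x, a, …, a] = 1` with `j` copies of `a`, then `x ∈ ζ (m + j)`: the element `[x, a]` again commutes
with `H` modulo `ζ m` (as `H` is normal) and is killed by `j - 1` copies of `a`, so by induction it
lies in `ζ (m + j - 1)`. Thus `x` commutes modulo `ζ (m + j - 1)` with `H` and with `a`, which
generate `G`.

Going down the lower central series `γ` of `H`, whose consecutive terms commute with `H` modulo the
next one, this gives `γ k H ≤ ζ ((c - k) n)`. At `k = 1` the same argument applied to `[h, a]`,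
`h ∈ H`, shows that `a` is central modulo `ζ (c n - 1)`, and together with `H ≤ ζ (c n)` this gives
`ζ (c n) = G`.
-/

section Engel

variable {G : Type*} [Group G]

theorem engel_succ' (x g : G) (j : ℕ) : engel x g (j + 1) = engel (engel x g 1) g j := by
  induction j with
  | zero => rfl
  | succ j ih => rw [engel, ih]; rfl

theorem commutatorElement_mem_of_engel_one_mem {N : Subgroup G} [N.Normal] {x g : G}
    (h : engel x g 1 ∈ N) : ⁅x, g⁆ ∈ N := by
  have : ⁅x, g⁆ = (x * g) * engel x g 1 * (x * g)⁻¹ := by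
    simp only [engel, commutatorElement_def]; group
  rw [this]
  exact ‹N.Normal›.conj_mem _ h _

end Engel

namespace Subgroup

section CentralizerMod

variable {G : Type*} [Group G]

def centralizerMod (S : Set G) (N : Subgroup G) [N.Normal] : Subgroup G :=
  (centralizer (mk' N '' S)).comap (mk' N)

variable {S : Set G} {N : Subgroup G} [N.Normal]

theorem mem_centralizerMod {x : G} : x ∈ centralizerMod S N ↔ ∀ s ∈ S, ⁅x, s⁆ ∈ N := by
  simp only [centralizerMod, mem_comap, mem_centralizer_iff, Set.forall_mem_image]
  refine forall₂_congr fun s _ => ?_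
  rw [← QuotientGroup.eq_one_iff, ← mk'_apply, map_commutatorElement,
    commutatorElement_eq_one_iff_mul_comm, eq_comm]

theorem centralizerMod_closure : centralizerMod (closure S) N = centralizerMod S N := by
  rw [centralizerMod, ← coe_map, MonoidHom.map_closure, centralizer_closure]; rfl

instance (H : Subgroup G) [H.Normal] : (centralizerMod H N).Normal := by
  have : (H.map (mk' N)).Normal := ‹H.Normal›.map _ (mk'_surjective N)
  rw [centralizerMod, ← coe_map]
  infer_instance

theorem upperCentralSeries_succ_eq_centralizerMod (k : ℕ) :
    upperCentralSeries G (k + 1) = centralizerMod Set.univ (upperCentralSeries G k) := by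
  ext x
  simp [mem_centralizerMod, mem_upperCentralSeries_succ_iff]

end CentralizerMod

section EngelGenerator

variable {G : Type*} [Group G] {H N : Subgroup G} {a : G}

theorem upperCentralSeries_succ_eq_centralizerMod_of_sup_closure_eq_top
    (hgen : H ⊔ closure {a} = ⊤) (k : ℕ) :
    upperCentralSeries G (k + 1) = centralizerMod (H ∪ {a}) (upperCentralSeries G k) := by
  rw [upperCentralSeries_succ_eq_centralizerMod, ← centralizerMod_closure (S := H ∪ {a}),
    closure_union, closure_eq, hgen, coe_top]

theorem lowerCentralSeries_le_centralizerMod [N.Normal] {k : ℕ}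
    (h : H.lowerCentralSeries (k + 1) ≤ N) : H.lowerCentralSeries k ≤ centralizerMod H N :=
  fun _ hx => mem_centralizerMod.2 fun _ hs => h (commutator_mem_commutator hx hs)

variable [H.Normal]

theorem engel_one_mem_centralizerMod [N.Normal] {x : G} (g : G)
    (hx : x ∈ centralizerMod H N) : engel x g 1 ∈ centralizerMod H N := by
  have : engel x g 1 = x⁻¹ * (g⁻¹ * x * g⁻¹⁻¹) := by simp only [engel, inv_inv, mul_assoc]
  rw [this]
  exact mul_mem (inv_mem hx) (Normal.conj_mem inferInstance _ hx _)

theorem mem_upperCentralSeries_of_engel_eq_one (hgen : H ⊔ closure {a} = ⊤) {m : ℕ} :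
    ∀ {j : ℕ} {x : G}, x ∈ centralizerMod H (upperCentralSeries G m) → engel x a j = 1 →
      x ∈ upperCentralSeries G (m + j)
  | 0, x, _, hx => by
    obtain rfl : x = 1 := hx
    exact one_mem _
  | j + 1, x, hxH, hx => by
    have h1 : engel x a 1 ∈ upperCentralSeries G (m + j) :=
      mem_upperCentralSeries_of_engel_eq_one hgen (engel_one_mem_centralizerMod a hxH)
        (by rwa [← engel_succ'])
    rw [← add_assoc, upperCentralSeries_succ_eq_centralizerMod_of_sup_closure_eq_top hgen,
      mem_centralizerMod]
    rintro s (hs | rfl)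
    · exact upperCentralSeries_mono G le_self_add (mem_centralizerMod.1 hxH s hs)
    · exact commutatorElement_mem_of_engel_one_mem h1

theorem lowerCentralSeries_le_upperCentralSeries_add (hgen : H ⊔ closure {a} = ⊤) {n : ℕ}
    (hEngel : ∀ x : G, engel x a n = 1) {k m : ℕ}
    (h : H.lowerCentralSeries (k + 1) ≤ upperCentralSeries G m) :
    H.lowerCentralSeries k ≤ upperCentralSeries G (m + n) := fun x hx =>
  mem_upperCentralSeries_of_engel_eq_one hgen (lowerCentralSeries_le_centralizerMod h hx)
    (hEngel x)

theorem lowerCentralSeries_le_upperCentralSeries_add_mul (hgen : H ⊔ closure {a} = ⊤) {n : ℕ}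
    (hEngel : ∀ x : G, engel x a n = 1) {m : ℕ} :
    ∀ {k i : ℕ}, H.lowerCentralSeries (k + i) ≤ upperCentralSeries G m →
      H.lowerCentralSeries k ≤ upperCentralSeries G (m + i * n)
  | _, 0, h => by simpa using h
  | k, i + 1, h => by
    rw [add_mul, one_mul, ← add_assoc]
    exact lowerCentralSeries_le_upperCentralSeries_add hgen hEngel
      (lowerCentralSeries_le_upperCentralSeries_add_mul hgen hEngel (by rwa [add_right_comm]))

theorem upperCentralSeries_eq_top_of_lowerCentralSeries_one_le (hgen : H ⊔ closure {a} = ⊤)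
    {j : ℕ} (hEngel : ∀ x : G, engel x a (j + 1) = 1) {m : ℕ}
    (h : H.lowerCentralSeries 1 ≤ upperCentralSeries G m) :
    upperCentralSeries G (m + (j + 1)) = ⊤ := by
  have ha : a ∈ upperCentralSeries G (m + (j + 1)) := by
    rw [← add_assoc, upperCentralSeries_succ_eq_centralizerMod_of_sup_closure_eq_top hgen,
      mem_centralizerMod]
    rintro s (hs | rfl)
    · rw [← commutatorElement_inv]
      refine inv_mem (commutatorElement_mem_of_engel_one_mem ?_)
      exact mem_upperCentralSeries_of_engel_eq_one hgen (engel_one_mem_centralizerMod a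
        (lowerCentralSeries_le_centralizerMod h hs))
        (by rw [← engel_succ', hEngel])
    · rw [commutatorElement_self]
      exact one_mem _
  rw [eq_top_iff, ← hgen, sup_le_iff, closure_le, Set.singleton_subset_iff]
  exact ⟨lowerCentralSeries_le_upperCentralSeries_add (k := 0) hgen hEngel h, ha⟩

end EngelGenerator

end Subgroup

/-- If `G = H⟨a⟩` with `H` normal nilpotent of class at most `c` and `a` an `n`-Engel
element of `G`, then `G` is nilpotent of class at most `c * n`. -/
theorem nilpotent_of_normal_nilpotent_and_engel_generator
    (G : Type*) [Group G] (H : Subgroup G) (hN : H.Normal) (a : G) (c n : ℕ)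
    (hc : 0 < c) (hn : 0 < n)
    (hgen : H ⊔ Subgroup.closure {a} = ⊤)
    (hclass : (⊤ : Subgroup H).lowerCentralSeries c = ⊥)
    (hEngel : ∀ x : G, engel x a n = 1) :
    Group.IsNilpotent G ∧ (⊤ : Subgroup G).lowerCentralSeries (c * n) = ⊥ := by
  obtain ⟨c, rfl⟩ := Nat.exists_eq_add_one.2 hc
  obtain ⟨j, rfl⟩ := Nat.exists_eq_add_one.2 hn
  have hH : H.lowerCentralSeries (1 + c) ≤ Subgroup.upperCentralSeries G 0 := by
    rw [← Subgroup.top_subtype_lowerCentralSeries, add_comm, hclass, Subgroup.map_bot]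
    exact bot_le
  have htop := Subgroup.upperCentralSeries_eq_top_of_lowerCentralSeries_one_le hgen hEngel
    (Subgroup.lowerCentralSeries_le_upperCentralSeries_add_mul hgen hEngel hH)
  rw [zero_add, ← add_one_mul] at htop
  have hlow := Subgroup.lowerCentralSeries_eq_bot_iff_upperCentralSeries_eq_top.2 htop
  exact ⟨Subgroup.nilpotent_iff_lowerCentralSeries.2 ⟨_, hlow⟩, hlow⟩
end

section
/- Let G = M⟨a⟩ be a profinite group where M is an abelian closed normal subgroup and a is an Engel element (for every x ∈ G there exists n with [x, a, ..., a] = 1, a repeated n times). Then G is nilpotent. -/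
open scoped IsMulCommutative commutatorElement

namespace Subgroup

theorem exists_eq_top_of_monotone_of_isClosed {H : Type*} [Group H] [TopologicalSpace H]
    [SeparatelyContinuousMul H] [CompactSpace H] [BaireSpace H] {K : ℕ → Subgroup H}
    (hmono : Monotone K) (hclosed : ∀ n, IsClosed (K n : Set H))
    (hcover : ∀ x, ∃ n, x ∈ K n) : ∃ n, K n = ⊤ := by
  obtain ⟨n, x, hx⟩ := nonempty_interior_of_iUnion_of_closed hclosed
    (Set.iUnion_eq_univ_iff.mpr hcover)
  have hopen : ∀ m, IsOpen (K (n + m) : Set H) := fun m =>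
    isOpen_mono (hmono (Nat.le_add_right n m))
      ((K n).isOpen_of_mem_nhds (mem_interior_iff_mem_nhds.mp hx))
  obtain ⟨m, hm⟩ := isCompact_univ.elim_directed_cover _ hopen
    (fun x _ => Set.mem_iUnion.mpr ((hcover x).imp fun k hk => hmono (by omega) hk))
    (hmono.comp fun _ _ => Nat.add_le_add_left (k := n)).directed_le
  exact ⟨n + m, eq_top_iff.mpr fun x _ => hm (Set.mem_univ x)⟩

theorem isClosed_upperCentralSeries (G : Type*) [Group G] [TopologicalSpace G]
    [IsTopologicalGroup G] [T1Space G] (n : ℕ) : IsClosed (upperCentralSeries G n : Set G) := by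
  induction n with
  | zero => simp
  | succ n ih =>
    have : (upperCentralSeries G (n + 1) : Set G) =
        ⋂ y, (fun x => x * y * x⁻¹ * y⁻¹) ⁻¹' upperCentralSeries G n := by
      ext; simp [mem_upperCentralSeries_succ_iff, commutatorElement_def]
    rw [this]
    exact isClosed_iInter fun y => ih.preimage (by fun_prop)

variable {G : Type*} [Group G] [TopologicalSpace G] [IsTopologicalGroup G]
  {M : Subgroup G} {a : G}

theorem eq_top_of_isClosed_of_le_of_mem (hgen : (M ⊔ closure {a}).topologicalClosure = ⊤)
    {S : Subgroup G} (hS : IsClosed (S : Set G)) (hMS : M ≤ S) (haS : a ∈ S) : S = ⊤ :=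
  top_le_iff.mp <| hgen ▸ topologicalClosure_minimal _
    (sup_le hMS ((closure_le S).mpr (Set.singleton_subset_iff.mpr haS))) hS

theorem commutatorElement_mem_of_topologicalClosure_eq_top
    (hgen : (M ⊔ closure {a}).topologicalClosure = ⊤) {N : Subgroup G} [N.Normal]
    (hN : IsClosed (N : Set G)) {x : G} (hxM : ∀ m ∈ M, ⁅x, m⁆ ∈ N)
    (hxa : ⁅x, a⁆ ∈ N) (g : G) : ⁅x, g⁆ ∈ N := by
  let S := (centralizer {(x : G ⧸ N)}).comap (QuotientGroup.mk' N)
  have hS : ∀ g, g ∈ S ↔ ⁅x, g⁆ ∈ N := fun g => by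
    rw [mem_comap, QuotientGroup.mk'_apply, mem_centralizer_singleton_iff,
      ← QuotientGroup.mk_mul, ← QuotientGroup.mk_mul, eq_comm, QuotientGroup.eq_iff_div_mem,
      commutatorElement_def, div_eq_mul_inv, mul_inv_rev]
    simp only [mul_assoc]
  have hSclosed : IsClosed (S : Set G) := by
    rw [show (S : Set G) = (fun g => ⁅x, g⁆) ⁻¹' N from Set.ext hS]
    exact hN.preimage (by simp only [commutatorElement_def]; fun_prop)
  have hStop := eq_top_of_isClosed_of_le_of_mem hgen hSclosed (fun m hm => (hS m).2 (hxM m hm))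
    ((hS a).2 hxa)
  exact (hS g).1 (hStop ▸ mem_top g)

theorem commutator_le_of_topologicalClosure_eq_top [M.Normal]
    (hgen : (M ⊔ closure {a}).topologicalClosure = ⊤) (hM : IsClosed (M : Set G)) :
    _root_.commutator G ≤ M := by
  have hcomm_mem : ∀ x, ∀ m ∈ M, ⁅x, m⁆ ∈ M := fun x m hm =>
    commutator_le_right ⊤ M (commutator_mem_commutator (mem_top x) hm)
  have ha : ∀ g, ⁅a, g⁆ ∈ M :=
    commutatorElement_mem_of_topologicalClosure_eq_top hgen hM (hcomm_mem a) (by simp)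
  exact commutator_le.mpr fun g _ h _ =>
    commutatorElement_mem_of_topologicalClosure_eq_top hgen hM (hcomm_mem g)
      (commutatorElement_inv a g ▸ M.inv_mem (ha g)) h

end Subgroup

theorem Monoid.End.monotone_ker_pow {H : Type*} [Group H] (f : Monoid.End H) :
    Monotone fun n : ℕ => (f ^ n).ker := by
  intro m n hmn x (hx : (f ^ m) x = 1)
  show (f ^ n) x = 1
  rw [← pow_sub_mul_pow f hmn, Monoid.End.coe_mul, Function.comp_apply, hx, map_one]

section EngelHom

variable {G : Type*} [Group G] (M : Subgroup G) [M.Normal] [IsMulCommutative M] (a : G)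

-- The product is taken in the commutative group `M →* M`, not in `Monoid.End M` (composition).
def engelHom : Monoid.End M :=
  ((MonoidHom.id M)⁻¹ * (MulAut.conjNormal a⁻¹).toMonoidHom : M →* M)

theorem coe_engelHom_apply (x : M) : (engelHom M a x : G) = (x : G)⁻¹ * (a⁻¹ * x * a) := by
  show ((x⁻¹ * MulAut.conjNormal a⁻¹ x : M) : G) = _
  simp

theorem coe_engelHom_pow_apply (x : M) (n : ℕ) :
    ((engelHom M a ^ n) x : G) = engel (x : G) a n := by
  induction n with
  | zero => rfl
  | succ n ih =>
    rw [pow_succ', Monoid.End.coe_mul, Function.comp_apply, coe_engelHom_apply, ih]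
    simp only [engel, mul_assoc]

variable [TopologicalSpace G] [IsTopologicalGroup G]

theorem continuous_engelHom : Continuous (engelHom M a) :=
  Continuous.subtype_mk
    ((by fun_prop : Continuous fun x : M => (x : G)⁻¹ * (a⁻¹ * x * a)).congr
      fun x => (coe_engelHom_apply M a x).symm) _

theorem exists_ker_engelHom_pow_eq_top [T2Space G] [CompactSpace M]
    (hEngel : ∀ x : M, ∃ n, engel (x : G) a n = 1) : ∃ n, (engelHom M a ^ n).ker = ⊤ :=
  Subgroup.exists_eq_top_of_monotone_of_isClosed (Monoid.End.monotone_ker_pow _)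
    (fun n => isClosed_singleton.preimage ((continuous_engelHom M a).iterate n))
    fun x => (hEngel x).imp fun n hn => Subtype.ext ((coe_engelHom_pow_apply M a x n).trans hn)

theorem coe_mem_upperCentralSeries_of_engelHom_pow_eq_one [T1Space G]
    (hgen : (M ⊔ Subgroup.closure {a}).topologicalClosure = ⊤) {n : ℕ} {x : M}
    (hx : (engelHom M a ^ n) x = 1) : (x : G) ∈ Subgroup.upperCentralSeries G n := by
  induction n generalizing x with
  | zero => simpa using hx
  | succ n ih =>
    rw [pow_succ, Monoid.End.coe_mul, Function.comp_apply] at hx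
    have hconj : ⁅(x : G), a⁆ = (x * a) * (engelHom M a x : G) * (x * a)⁻¹ := by
      rw [coe_engelHom_apply, commutatorElement_def]; group
    refine Subgroup.mem_upperCentralSeries_succ_iff.mpr <|
      Subgroup.commutatorElement_mem_of_topologicalClosure_eq_top hgen
        (Subgroup.isClosed_upperCentralSeries G n) (fun m hm => ?_) ?_
    · rw [commutatorElement_eq_one_iff_mul_comm.mpr (setLike_mul_comm x.2 hm)]
      exact one_mem _
    · rw [hconj]
      exact Subgroup.Normal.conj_mem inferInstance _ (ih hx) _

end EngelHom

theorem profinite_abelian_by_engel_element_nilpotent_general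
    (G : Type*) [Group G] [TopologicalSpace G] [IsTopologicalGroup G]
    [CompactSpace G] [T2Space G]
    (M : Subgroup G) (hMn : M.Normal) (hMclosed : IsClosed (M : Set G))
    (hMab : ∀ x ∈ M, ∀ y ∈ M, x * y = y * x) (a : G)
    (hgen : (M ⊔ Subgroup.closure {a}).topologicalClosure = ⊤)
    (hEngel : ∀ x : G, ∃ n : ℕ, engel x a n = 1) :
    Group.IsNilpotent G := by
  have : IsMulCommutative M := IsMulCommutative.of_setLike_mul_comm hMab
  have : CompactSpace M := isCompact_iff_compactSpace.mp hMclosed.isCompact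
  obtain ⟨N, hN⟩ := exists_ker_engelHom_pow_eq_top M a fun x => hEngel x
  have hMN : M ≤ Subgroup.upperCentralSeries G N := fun x hx =>
    coe_mem_upperCentralSeries_of_engelHom_pow_eq_one M a hgen
      (MonoidHom.mem_ker.mp (hN ▸ Subgroup.mem_top (⟨x, hx⟩ : M)))
  have hcomm : commutator G ≤ M :=
    Subgroup.commutator_le_of_topologicalClosure_eq_top hgen hMclosed
  refine ⟨N + 1, eq_top_iff.mpr fun g _ =>
    Subgroup.mem_upperCentralSeries_succ_iff.mpr fun h => ?_⟩
  exact hMN (hcomm (Subgroup.commutator_mem_commutator (Subgroup.mem_top g) (Subgroup.mem_top h)))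

/-- Let `G = M⟨a⟩` be a profinite group with `M` an abelian closed normal subgroup and
`a` an Engel element. Then `G` is nilpotent. -/
theorem profinite_abelian_by_engel_element_nilpotent
    (G : Type*) [Group G] [TopologicalSpace G] [IsTopologicalGroup G]
    [CompactSpace G] [T2Space G] [TotallyDisconnectedSpace G]
    (M : Subgroup G) (hMn : M.Normal) (hMclosed : IsClosed (M : Set G))
    (hMab : ∀ x ∈ M, ∀ y ∈ M, x * y = y * x) (a : G)
    (hgen : (M ⊔ Subgroup.closure {a}).topologicalClosure = ⊤)
    (hEngel : ∀ x : G, ∃ n : ℕ, engel x a n = 1) :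
    Group.IsNilpotent G :=
  profinite_abelian_by_engel_element_nilpotent_general G M hMn hMclosed hMab a hgen hEngel
end

section
/- Let G be a profinite group and K a procyclic pro-p closed subgroup of G such that K ∩ K^x ≠ 1 for every x ∈ G. Then K contains a nontrivial closed subgroup L, of finite index in K, which is normal in G. -/
/- The closed subgroups of a procyclic pro-`p` group `K = ⟨k⟩‾` form a chain, because they do so
in each of its finite cyclic `p`-group quotients; the subgroups `Kₙ = ⟨k^(pⁿ)⟩‾` have finite
index and are cofinal among the nontrivial ones. If `K` is finite, the smallest of the groups
`K ∩ x K x⁻¹` lies in every conjugate of `K`. Otherwise every `x` lies in one of the closed sets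
`Cₙ = {x | Kₙ ≤ x K x⁻¹}`, so by Baire some `Cₙ` has an interior point; comparing conjugates of
the `Kₙ` inside the chain then puts a neighbourhood of every point into some `Cₙ`, and by
compactness a single `C_N` is all of `G`, that is, `K_N` lies in the normal core of `K`. -/

/-- A topological group is pro-`p` if the quotient by every open normal subgroup is a
finite `p`-group (in the context of profinite groups). -/
def IsProP (p : ℕ) (G : Type*) [Group G] [TopologicalSpace G] : Prop :=
  ∀ N : Subgroup G, ∀ _ : N.Normal, IsOpen (N : Set G) → IsPGroup p (G ⧸ N)

/-- A subgroup of a topological group is procyclic if it is the topological closure of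
a subgroup generated by a single element. -/
def IsProcyclic {G : Type*} [Group G] [TopologicalSpace G] [IsTopologicalGroup G] (H : Subgroup G) : Prop :=
  ∃ k : G, (Subgroup.closure {k}).topologicalClosure = H

open Subgroup ConjAct
open scoped Pointwise

theorem IsCyclic.le_of_card_dvd {Q : Type*} [Group Q] [Finite Q] [IsCyclic Q] {A B : Subgroup Q}
    (h : Nat.card A ∣ Nat.card B) : A ≤ B := by
  classical
  have := Fintype.ofFinite Q
  let S : Set Q := {x | x ^ Nat.card B = 1}
  have hBS : (B : Set Q) ⊆ S := fun b hb =>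
    orderOf_dvd_iff_pow_eq_one.mp (B.orderOf_dvd_natCard hb)
  have hS : Nat.card S ≤ Nat.card B := by
    rw [Nat.card_eq_fintype_card, Fintype.card_ofFinset]
    exact IsCyclic.card_pow_eq_one_le Nat.card_pos
  -- a cyclic group has at most `n` solutions of `x ^ n = 1`, so `B` is exactly this solution set
  have hBeq : (B : Set Q) = S := (Set.toFinite S).eq_of_subset_of_card_le hBS hS
  intro a ha
  rw [← SetLike.mem_coe, hBeq]
  exact orderOf_dvd_iff_pow_eq_one.mp ((A.orderOf_dvd_natCard ha).trans h)

theorem IsPGroup.le_total_of_isCyclic {p : ℕ} [Fact p.Prime] {Q : Type*} [Group Q] [Finite Q]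
    [IsCyclic Q] (hQ : IsPGroup p Q) (A B : Subgroup Q) : A ≤ B ∨ B ≤ A := by
  obtain ⟨m, hm⟩ := (hQ.to_subgroup A).exists_card_eq
  obtain ⟨n, hn⟩ := (hQ.to_subgroup B).exists_card_eq
  rcases le_total m n with h | h
  · exact .inl (IsCyclic.le_of_card_dvd (by rw [hm, hn]; exact pow_dvd_pow p h))
  · exact .inr (IsCyclic.le_of_card_dvd (by rw [hm, hn]; exact pow_dvd_pow p h))

section TopologicallyCyclic

variable {H : Type*} [Group H] [TopologicalSpace H] [IsTopologicalGroup H] {g : H}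

theorem isCyclic_quotient_of_topologicalClosure_zpowers_eq_top
    (hg : (zpowers g).topologicalClosure = ⊤) {N : Subgroup H} [N.Normal]
    (hN : IsOpen (N : Set H)) : IsCyclic (H ⧸ N) := by
  let π := QuotientGroup.mk' N
  have hle : zpowers g ≤ (zpowers (π g)).comap π := zpowers_le.mpr (mem_zpowers _)
  have hopen : IsOpen ((zpowers (π g)).comap π : Set H) :=
    isOpen_mono (by simpa [π] using ker_le_comap π (zpowers (π g))) hN
  have htop : (zpowers (π g)).comap π = ⊤ := top_le_iff.mp <|
    hg ▸ topologicalClosure_minimal _ hle (isClosed_of_isOpen _ hopen)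
  refine isCyclic_iff_exists_zpowers_eq_top.mpr ⟨π g, ?_⟩
  have hπ := QuotientGroup.mk'_surjective N
  rw [← map_comap_eq_self_of_surjective hπ (zpowers (π g)), htop, map_top_of_surjective _ hπ]

theorem finiteIndex_topologicalClosure_zpowers_pow (hg : (zpowers g).topologicalClosure = ⊤)
    {m : ℕ} (hm : 0 < m) : (zpowers (g ^ m)).topologicalClosure.FiniteIndex := by
  set C := (zpowers (g ^ m)).topologicalClosure
  -- makes `H ⧸ C` a `T1Space`, so that the finite set `R` below is closed
  have : IsClosed (C : Set H) := (zpowers (g ^ m)).isClosed_topologicalClosure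
  let R : Set (H ⧸ C) := (fun j : ℤ => ((g ^ j : H) : H ⧸ C)) '' Set.Ico 0 m
  have hR : R.Finite := (Set.finite_Ico 0 (m : ℤ)).image _
  have hzpowers : (zpowers g : Set H) ⊆ QuotientGroup.mk ⁻¹' R := by
    rintro _ ⟨i, rfl⟩
    refine ⟨i % m, ⟨Int.emod_nonneg _ (by omega), Int.emod_lt_of_pos _ (by omega)⟩, ?_⟩
    rw [QuotientGroup.eq]
    have : (g ^ (i % m))⁻¹ * g ^ i = (g ^ m) ^ (i / m) := by
      rw [← zpow_neg, ← zpow_add, ← zpow_natCast, ← zpow_mul]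
      congr 1
      linarith [Int.mul_ediv_add_emod i m]
    rw [this]
    exact le_topologicalClosure _ (zpow_mem_zpowers _ _)
  have huniv : Set.univ ⊆ QuotientGroup.mk ⁻¹' R := by
    rw [← coe_top, ← hg, topologicalClosure_coe]
    exact closure_minimal hzpowers (hR.isClosed.preimage continuous_quotient_mk')
  have : Finite (H ⧸ C) := Set.finite_univ_iff.mp <| hR.subset fun q _ => by
    obtain ⟨h, rfl⟩ := QuotientGroup.mk_surjective q
    exact huniv (Set.mem_univ h)
  exact finiteIndex_of_finite_quotient

variable [CompactSpace H] [TotallyDisconnectedSpace H]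

theorem exists_isOpen_le_and_notMem {A : Subgroup H} (hA : IsClosed (A : Set H)) {a : H}
    (ha : a ∉ A) : ∃ M : Subgroup H, IsOpen (M : Set H) ∧ A ≤ M ∧ a ∉ M := by
  rw [show A = _ from ProfiniteGrp.closedSubgroup_eq_sInf_open ⟨A, hA⟩, mem_sInf] at ha
  push Not at ha
  obtain ⟨M, ⟨hM, hAM⟩, haM⟩ := ha
  exact ⟨M, hM, hAM, haM⟩

theorem isChain_isClosed_of_topologicalClosure_zpowers_eq_top {p : ℕ} [Fact p.Prime]
    (hH : IsProP p H) (hg : (zpowers g).topologicalClosure = ⊤) :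
    IsChain (· ≤ ·) {A : Subgroup H | IsClosed (A : Set H)} := by
  intro A hA B hB _
  by_contra! hAB
  obtain ⟨a, haA, haB⟩ := SetLike.not_le_iff_exists.mp hAB.1
  obtain ⟨b, hbB, hbA⟩ := SetLike.not_le_iff_exists.mp hAB.2
  obtain ⟨M, hM, hBM, haM⟩ := exists_isOpen_le_and_notMem hB haB
  obtain ⟨M', hM', hAM', hbM'⟩ := exists_isOpen_le_and_notMem hA hbA
  obtain ⟨N, hN⟩ := ProfiniteGrp.exist_openNormalSubgroup_sub_open_nhds_of_one (hM.inter hM')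
    ⟨M.one_mem, M'.one_mem⟩
  have : Finite (H ⧸ N.toSubgroup) := quotient_finite_of_isOpen _ N.isOpen
  have : IsCyclic (H ⧸ N.toSubgroup) :=
    isCyclic_quotient_of_topologicalClosure_zpowers_eq_top hg N.isOpen
  let π := QuotientGroup.mk' N.toSubgroup
  have hsup {C D : Subgroup H} (h : C.map π ≤ D.map π) : C ≤ D ⊔ N.toSubgroup := by
    simpa [π, comap_map_eq] using (le_comap_map π C).trans (comap_mono h)
  rcases (hH _ N.isNormal' N.isOpen).le_total_of_isCyclic (A.map π) (B.map π) with h | h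
  · exact haM (sup_le hBM (fun x hx => (hN hx).1) (hsup h haA))
  · exact hbM' (sup_le hAM' (fun x hx => (hN hx).2) (hsup h hbB))

theorem exists_topologicalClosure_zpowers_pow_le [T1Space H] {p : ℕ} [Fact p.Prime]
    (hH : IsProP p H) (hg : (zpowers g).topologicalClosure = ⊤) {A : Subgroup H}
    (hA : IsClosed (A : Set H)) (hA₁ : A ≠ ⊥) :
    ∃ n, (zpowers (g ^ p ^ n)).topologicalClosure ≤ A := by
  by_contra! hcon
  obtain ⟨a, haA, ha⟩ : ∃ a ∈ A, a ≠ 1 := by simpa [eq_bot_iff_forall] using hA₁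
  obtain ⟨N, hN⟩ := ProfiniteGrp.exist_openNormalSubgroup_sub_open_nhds_of_one
    isOpen_compl_singleton ha.symm
  obtain ⟨e, he⟩ := hH _ N.isNormal' N.isOpen (g : H ⧸ N.toSubgroup)
  have hle : (zpowers (g ^ p ^ e)).topologicalClosure ≤ N.toSubgroup :=
    topologicalClosure_minimal _
      (zpowers_le.mpr ((QuotientGroup.eq_one_iff _).mp (by rwa [QuotientGroup.mk_pow])))
      (isClosed_of_isOpen _ N.isOpen)
  have hAle := ((isChain_isClosed_of_topologicalClosure_zpowers_eq_top hH hg).total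
    (isClosed_topologicalClosure _) hA).resolve_left (hcon e)
  exact hN (hle (hAle haA)) rfl

end TopologicallyCyclic

section ClosedSubgroups

variable {G : Type*} [Group G] {K : Subgroup G}

theorem conjAct_smul_ne_bot {A : Subgroup G} (hA : A ≠ ⊥) (c : ConjAct G) : c • A ≠ ⊥ :=
  fun h => hA (by rw [← inv_smul_smul c A, h, smul_bot])

theorem le_mul_smul_of_le_smul {A B : Subgroup G} {c d : ConjAct G} (hA : A ≤ c • B)
    (hB : B ≤ d • K) : A ≤ (c * d) • K := by
  rw [mul_smul]
  exact hA.trans (pointwise_smul_le_pointwise_smul_iff.mpr hB)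

variable [TopologicalSpace G]

theorem isChain_isClosed_le_of_subtype
    (h : IsChain (· ≤ ·) {A : Subgroup K | IsClosed (A : Set K)}) :
    IsChain (· ≤ ·) {A : Subgroup G | A ≤ K ∧ IsClosed (A : Set G)} := by
  rintro A ⟨hAK, hA⟩ B ⟨hBK, hB⟩ -
  dsimp only
  rw [← map_subgroupOf_eq_of_le hAK, ← map_subgroupOf_eq_of_le hBK, map_subtype_le_map_subtype,
    map_subtype_le_map_subtype]
  exact h.total (hA.preimage continuous_subtype_val) (hB.preimage continuous_subtype_val)

variable [IsTopologicalGroup G]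

theorem map_subtype_topologicalClosure (hK : IsClosed (K : Set G)) (S : Subgroup K) :
    S.topologicalClosure.map K.subtype = (S.map K.subtype).topologicalClosure :=
  SetLike.coe_injective <| by
    rw [coe_map, topologicalClosure_coe, topologicalClosure_coe, coe_map, coe_subtype]
    exact (hK.isClosedEmbedding_subtypeVal.closure_image_eq _).symm

theorem IsProcyclic.exists_topologicalClosure_zpowers_eq_top (hK : IsClosed (K : Set G))
    (hproc : IsProcyclic K) : ∃ g : K, (zpowers g).topologicalClosure = ⊤ := by
  obtain ⟨k, hk⟩ := hproc
  have hkK : k ∈ K := hk ▸ le_topologicalClosure _ (subset_closure rfl)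
  refine ⟨⟨k, hkK⟩, map_injective K.subtype_injective ?_⟩
  rw [map_subtype_topologicalClosure hK, MonoidHom.map_zpowers, ← MonoidHom.range_eq_map,
    range_subtype, coe_subtype, zpowers_eq_closure, hk]

theorem isClosed_conjAct_smul {A : Subgroup G} (hA : IsClosed (A : Set G)) (c : ConjAct G) :
    IsClosed ((c • A : Subgroup G) : Set G) := by
  rw [coe_pointwise_smul]
  exact hA.smul c

theorem isClosed_setOf_le_toConjAct_smul (hK : IsClosed (K : Set G)) (A : Subgroup G) :
    IsClosed {x : G | A ≤ toConjAct x • K} := by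
  have : {x : G | A ≤ toConjAct x • K} = ⋂ a ∈ A, (fun x => x⁻¹ * a * x) ⁻¹' K := by
    ext x
    have hconj (a : G) : (toConjAct x)⁻¹ • a = x⁻¹ * a * x := by
      rw [← toConjAct_inv, toConjAct_smul, inv_inv]
    simp only [Set.mem_ofPred_eq, Set.mem_iInter, Set.mem_preimage, SetLike.le_def,
      mem_pointwise_smul_iff_inv_smul_mem, hconj, SetLike.mem_coe]
  rw [this]
  exact isClosed_biInter fun a _ => hK.preimage (by fun_prop)

theorem isClosed_inf_toConjAct_smul (hK : IsClosed (K : Set G)) (x : G) :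
    IsClosed ((K ⊓ toConjAct x • K : Subgroup G) : Set G) := by
  rw [coe_inf]
  exact hK.inter (isClosed_conjAct_smul hK _)

end ClosedSubgroups

structure IsCofinalFiltration {G : Type*} [Group G] [TopologicalSpace G] (K : Subgroup G)
    (Kn : ℕ → Subgroup G) : Prop where
  antitone : Antitone Kn
  le : ∀ n, Kn n ≤ K
  isClosed : ∀ n, IsClosed (Kn n : Set G)
  ne_bot : ∀ n, Kn n ≠ ⊥
  exists_le : ∀ A ≤ K, IsClosed (A : Set G) → A ≠ ⊥ → ∃ n, Kn n ≤ A

section NormalCore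

variable {G : Type*} [Group G] [TopologicalSpace G] [IsTopologicalGroup G] {K : Subgroup G}

theorem exists_le_normalCore_of_finite [Finite K] (hK : IsClosed (K : Set G))
    (hint : ∀ x : G, K ⊓ toConjAct x • K ≠ ⊥)
    (hchain : IsChain (· ≤ ·) {A : Subgroup G | A ≤ K ∧ IsClosed (A : Set G)}) :
    ∃ J ≤ K.normalCore, J ≠ ⊥ := by
  let D (x : G) : Subgroup G := K ⊓ toConjAct x • K
  have hD (x : G) : D x ≤ K ∧ IsClosed (D x : Set G) :=
    ⟨inf_le_left, isClosed_inf_toConjAct_smul hK x⟩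
  have (x : G) : Finite (D x) := Set.Finite.subset (Set.toFinite (K : Set G)) (hD x).1
  let x₀ := Function.argmin fun x => Nat.card (D x)
  have hmin (x : G) : D x₀ ≤ D x := (hchain.total (hD x₀) (hD x)).elim id
    fun h => (eq_of_le_of_card_ge h (Function.argmin_le (fun x => Nat.card (D x)) x)).ge
  refine ⟨D x₀, ?_, hint x₀⟩
  rw [normalCore_eq_iInf_conjAct]
  exact le_iInf fun c => (hmin (ofConjAct c)).trans inf_le_right

variable {Kn : ℕ → Subgroup G}

theorem IsCofinalFiltration.exists_le_toConjAct_smul (hKn : IsCofinalFiltration K Kn)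
    (hK : IsClosed (K : Set G)) (hint : ∀ x : G, K ⊓ toConjAct x • K ≠ ⊥) (x : G) :
    ∃ n, Kn n ≤ toConjAct x • K := by
  obtain ⟨n, hn⟩ := hKn.exists_le _ inf_le_left (isClosed_inf_toConjAct_smul hK x) (hint x)
  exact ⟨n, hn.trans inf_le_right⟩

theorem IsCofinalFiltration.exists_le_toConjAct_smul_of_isChain
    (hKn : IsCofinalFiltration K Kn) (hK : IsClosed (K : Set G))
    (hint : ∀ x : G, K ⊓ toConjAct x • K ≠ ⊥)
    (hchain : IsChain (· ≤ ·) {A : Subgroup G | A ≤ K ∧ IsClosed (A : Set G)}) (a : ℕ) (z : G) :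
    ∃ n, Kn n ≤ toConjAct z • Kn a := by
  obtain ⟨m, hm⟩ := hKn.exists_le_toConjAct_smul hK hint z
  -- `z⁻¹ Kₘ z` and `Kₐ` are comparable closed subgroups of `K`; if `Kₐ` is the smaller one,
  -- then `z Kₐ z⁻¹ ≤ Kₘ` is a nontrivial closed subgroup of `K`
  rcases hchain.total ⟨subset_pointwise_smul_iff.mp hm, isClosed_conjAct_smul (hKn.isClosed m) _⟩
    ⟨hKn.le a, hKn.isClosed a⟩ with h | h
  · exact ⟨m, subset_pointwise_smul_iff.mpr h⟩
  · exact hKn.exists_le _ ((pointwise_smul_subset_iff.mpr h).trans (hKn.le m))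
      (isClosed_conjAct_smul (hKn.isClosed a) _) (conjAct_smul_ne_bot (hKn.ne_bot a) _)

variable [CompactSpace G]

theorem IsCofinalFiltration.exists_one_mem_interior (hKn : IsCofinalFiltration K Kn)
    (hK : IsClosed (K : Set G)) (hint : ∀ x : G, K ⊓ toConjAct x • K ≠ ⊥) :
    ∃ a, (1 : G) ∈ interior {x : G | Kn a ≤ toConjAct x • K} := by
  obtain ⟨M, x, hx⟩ := nonempty_interior_of_iUnion_of_closed
    (fun n => isClosed_setOf_le_toConjAct_smul hK (Kn n))
    (Set.eq_univ_of_forall fun x => Set.mem_iUnion.mpr (hKn.exists_le_toConjAct_smul hK hint x))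
  -- `x⁻¹ K_M x` is a nontrivial closed subgroup of `K`, hence contains some `Kₐ`, and then the
  -- neighbourhood `x⁻¹ • interior C_M` of `1` lies in `Cₐ`
  obtain ⟨a, ha⟩ := hKn.exists_le _ (subset_pointwise_smul_iff.mp (interior_subset hx))
    (isClosed_conjAct_smul (hKn.isClosed M) _) (conjAct_smul_ne_bot (hKn.ne_bot M) _)
  refine ⟨a, interior_maximal ?_ (isOpen_interior.smul x⁻¹) ⟨x, hx, inv_mul_cancel x⟩⟩
  rintro _ ⟨v, hv, rfl⟩
  simpa using le_mul_smul_of_le_smul ha (interior_subset hv)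

theorem IsCofinalFiltration.exists_le_normalCore (hKn : IsCofinalFiltration K Kn)
    (hK : IsClosed (K : Set G)) (hint : ∀ x : G, K ⊓ toConjAct x • K ≠ ⊥)
    (hchain : IsChain (· ≤ ·) {A : Subgroup G | A ≤ K ∧ IsClosed (A : Set G)}) :
    ∃ N, Kn N ≤ K.normalCore := by
  obtain ⟨a, ha⟩ := hKn.exists_one_mem_interior hK hint
  have hcover (z : G) : ∃ n, z ∈ interior {x : G | Kn n ≤ toConjAct x • K} := by
    obtain ⟨n, hn⟩ := hKn.exists_le_toConjAct_smul_of_isChain hK hint hchain a z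
    refine ⟨n, interior_maximal ?_ (isOpen_interior.smul z) ⟨1, ha, mul_one z⟩⟩
    rintro _ ⟨u, hu, rfl⟩
    simpa using le_mul_smul_of_le_smul hn (interior_subset hu)
  obtain ⟨N, hN⟩ := isCompact_univ.elim_directed_cover _ (fun n => isOpen_interior)
    (fun z _ => Set.mem_iUnion.mpr (hcover z))
    (Monotone.directed_le fun m n hmn => interior_mono fun x hx => (hKn.antitone hmn).trans hx)
  refine ⟨N, ?_⟩
  rw [normalCore_eq_iInf_conjAct]
  exact le_iInf fun c => interior_subset (hN (Set.mem_univ (ofConjAct c)))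

end NormalCore

section ProcyclicProP

variable {G : Type*} [Group G] [TopologicalSpace G] [IsTopologicalGroup G] [CompactSpace G]
  [TotallyDisconnectedSpace G] {K : Subgroup G} {p : ℕ} [Fact p.Prime]

theorem IsProcyclic.isChain_isClosed_le (hproc : IsProcyclic K) (hK : IsClosed (K : Set G))
    (hproP : IsProP p K) :
    IsChain (· ≤ ·) {A : Subgroup G | A ≤ K ∧ IsClosed (A : Set G)} := by
  have : CompactSpace K := isCompact_iff_compactSpace.mp hK.isCompact
  obtain ⟨g, hg⟩ := hproc.exists_topologicalClosure_zpowers_eq_top hK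
  exact isChain_isClosed_le_of_subtype
    (isChain_isClosed_of_topologicalClosure_zpowers_eq_top hproP hg)

theorem IsProcyclic.exists_isCofinalFiltration [T2Space G] [Infinite K] (hproc : IsProcyclic K)
    (hK : IsClosed (K : Set G)) (hproP : IsProP p K) :
    ∃ Kn, IsCofinalFiltration K Kn ∧ ∀ n, (Kn n).relIndex K ≠ 0 := by
  have : CompactSpace K := isCompact_iff_compactSpace.mp hK.isCompact
  obtain ⟨g, hg⟩ := hproc.exists_topologicalClosure_zpowers_eq_top hK
  let Hn (n : ℕ) : Subgroup K := (zpowers (g ^ p ^ n)).topologicalClosure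
  have hHn (n : ℕ) : (Hn n).FiniteIndex :=
    finiteIndex_topologicalClosure_zpowers_pow hg (pow_pos (Fact.out : p.Prime).pos n)
  have hrel (n : ℕ) : ((Hn n).map K.subtype).relIndex K = (Hn n).index := by
    rw [relIndex, subgroupOf, comap_map_eq_self_of_injective K.subtype_injective]
  refine ⟨fun n => (Hn n).map K.subtype, ⟨?_, fun n => map_subtype_le _, fun n => ?_, fun n => ?_,
    fun A hAK hA hA₁ => ?_⟩, fun n => hrel n ▸ (hHn n).index_ne_zero⟩
  · intro m n hmn
    refine map_mono (topologicalClosure_mono (zpowers_le.mpr ?_))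
    obtain ⟨c, hc⟩ := pow_dvd_pow p hmn
    rw [hc, pow_mul]
    exact npow_mem_zpowers _ _
  · exact hK.isClosedMap_subtype_val _ (zpowers (g ^ p ^ n)).isClosed_topologicalClosure
  · intro h
    apply (hHn n).index_ne_zero
    rw [(map_eq_bot_iff_of_injective _ K.subtype_injective).mp h, index_bot,
      Nat.card_eq_zero_of_infinite]
  · have hA₁' : A.subgroupOf K ≠ ⊥ := fun h => hA₁ ((subgroupOf_eq_bot.mp h).eq_bot_of_le hAK)
    obtain ⟨n, hn⟩ := exists_topologicalClosure_zpowers_pow_le hproP hg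
      (hA.preimage continuous_subtype_val) hA₁'
    exact ⟨n, map_subgroupOf_eq_of_le hAK ▸ map_mono hn⟩

end ProcyclicProP

/-- Let `G` be a profinite group and `K` a procyclic pro-`p` closed subgroup such that
`K ∩ K^x ≠ 1` for every `x ∈ G`. Then `K` contains a nontrivial closed subgroup of
finite index in `K` which is normal in `G`. -/
theorem procyclic_proP_subgroup_contains_normal
    (p : ℕ) (hp : p.Prime) (G : Type*) [Group G] [TopologicalSpace G]
    [IsTopologicalGroup G] [CompactSpace G] [T2Space G] [TotallyDisconnectedSpace G]
    (K : Subgroup G) (hKclosed : IsClosed (K : Set G))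
    (hKproc : IsProcyclic K) (hKproP : IsProP p K)
    (hint : ∀ x : G, K ⊓ K.map (MulAut.conj x).toMonoidHom ≠ ⊥) :
    ∃ L : Subgroup G, L ≤ K ∧ L ≠ ⊥ ∧ IsClosed (L : Set G) ∧
      L.relIndex K ≠ 0 ∧ L.Normal := by
  have : Fact p.Prime := ⟨hp⟩
  have hchain := hKproc.isChain_isClosed_le hKclosed hKproP
  obtain ⟨J, hJ, hJ₁, hJK⟩ : ∃ J ≤ K.normalCore, J ≠ ⊥ ∧ J.relIndex K ≠ 0 := by
    rcases finite_or_infinite K with hfin | hinf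
    · obtain ⟨J, hJ, hJ₁⟩ := exists_le_normalCore_of_finite hKclosed hint hchain
      exact ⟨J, hJ, hJ₁, FiniteIndex.index_ne_zero⟩
    · obtain ⟨Kn, hKn, hrel⟩ := hKproc.exists_isCofinalFiltration hKclosed hKproP
      obtain ⟨N, hN⟩ := hKn.exists_le_normalCore hKclosed hint hchain
      exact ⟨Kn N, hN, hKn.ne_bot N, hrel N⟩
  exact ⟨K.normalCore, K.normalCore_le, fun h => hJ₁ (le_bot_iff.mp (h ▸ hJ)),
    K.normalCore_isClosed hKclosed,
    fun h => hJK (Nat.eq_zero_of_zero_dvd (h ▸ relIndex_dvd_of_le_left K hJ)),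
    K.normalCore_normal⟩
end

section
/- Let G be a finite group, and suppose G has a tower P₁, P₂, P₃ of height 3 (each Pᵢ of prime-power order, Pⱼ normalized by Pᵢ for i ≤ j, and P_{i+1} = γ_∞(P_{i+1}Pᵢ)). If γ_∞(N) is cyclic for every metanilpotent subgroup N of P₃P₂P₁ of the form P_{i+1}Pᵢ, and the automorphism group of a cyclic group is abelian, then a contradiction arises: no such tower exists when P₃ = γ_∞(P₃P₂) is cyclic and P₂ = γ_∞(P₂P₁). Concretely: if P₃ is cyclic, P₂P₁ normalizes P₃, P₂ = γ_∞(P₂P₁), and P₃ = γ_∞(P₃P₂), then P₃ = 1. -/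
/-!
A cyclic group has an abelian automorphism group, so every commutator of elements normalizing
the cyclic group `P₃` acts trivially on it. Since `P₂ = γ_∞(P₂P₁)` lies in the commutator
subgroup of `P₂P₁`, which normalizes `P₃`, the subgroup `P₂` centralizes `P₃`. Then `P₃` is
central in `P₃P₂`, which is therefore a central product of an abelian group and a `p`-group,
hence nilpotent, and its `γ_∞`, namely `P₃`, is trivial.
-/

/-- `γ_∞(H)` for a subgroup `H` of `G`, viewed as a subgroup of `G`: the intersection of
all terms of the lower central series of `H`. -/
def gammaInfSub {G : Type*} [Group G] (H : Subgroup G) : Subgroup G :=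
  ⨅ n : ℕ, (Subgroup.lowerCentralSeries (⊤ : Subgroup H) n).map H.subtype

open Subgroup
open scoped commutatorElement

section

variable {G : Type*} [Group G]

lemma gammaInfSub_le_commutator (H : Subgroup G) : gammaInfSub H ≤ ⁅H, H⁆ := by
  refine (iInf_le _ 1).trans_eq ?_
  rw [top_lowerCentralSeries_one, commutator_def, map_commutator, ← MonoidHom.range_eq_map,
    range_subtype]

lemma gammaInfSub_eq_bot_of_isNilpotent (H : Subgroup G) [Group.IsNilpotent H] :
    gammaInfSub H = ⊥ := by
  obtain ⟨n, hn⟩ := Subgroup.nilpotent_iff_lowerCentralSeries.mp ‹Group.IsNilpotent H›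
  exact le_bot_iff.mp ((iInf_le _ n).trans_eq (by rw [hn, Subgroup.map_bot]))

lemma IsCyclic.commute_mulAut (C : Type*) [Group C] [IsCyclic C] (f g : MulAut C) :
    Commute f g := by
  simpa using (Commute.all (IsCyclic.mulAutMulEquiv C f) (IsCyclic.mulAutMulEquiv C g)).map
    (IsCyclic.mulAutMulEquiv C).symm

lemma commutator_le_centralizer_of_isCyclic {P H K : Subgroup G} [IsCyclic P]
    (hH : H ≤ normalizer (P : Set G)) (hK : K ≤ normalizer (P : Set G)) :
    ⁅H, K⁆ ≤ centralizer (P : Set G) := by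
  rw [commutator_le]
  intro h hh k hk
  have hker :
      ⁅(⟨h, hH hh⟩ : normalizer (P : Set G)), ⟨k, hK hk⟩⁆ ∈ P.normalizerMonoidHom.ker := by
    rw [MonoidHom.mem_ker, map_commutatorElement, commutatorElement_eq_one_iff_commute]
    exact IsCyclic.commute_mulAut P _ _
  rw [normalizerMonoidHom_ker] at hker
  exact hker

lemma isNilpotent_sup_of_le_centralizer {P Q : Subgroup G} [Group.IsNilpotent P]
    [Group.IsNilpotent Q] (hPQ : P ≤ centralizer (Q : Set G)) :
    Group.IsNilpotent (P ⊔ Q : Subgroup G) := by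
  let f := P.subtype.noncommCoprod Q.subtype fun p q ↦
    (mem_centralizer_iff.mp (hPQ p.2) q q.2).symm
  have hf : f.range = P ⊔ Q := by
    simpa only [range_subtype] using MonoidHom.noncommCoprod_range P.subtype Q.subtype _
  rw [← hf]
  exact Group.nilpotent_of_surjective f.rangeRestrict f.rangeRestrict_surjective

end

theorem no_tower_of_height_three_with_cyclic_top_general
    (G : Type*) [Group G] (P1 P2 P3 : Subgroup G)
    (h2 : ∃ p k : ℕ, p.Prime ∧ Nat.card P2 = p ^ k)
    (hn13 : P1 ≤ Subgroup.normalizer (P3 : Set G))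
    (hn23 : P2 ≤ Subgroup.normalizer (P3 : Set G))
    (hP2 : P2 = gammaInfSub (P2 ⊔ P1)) (hP3 : P3 = gammaInfSub (P3 ⊔ P2))
    (hcyc : IsCyclic P3) :
    P3 = ⊥ := by
  have hP2_centralizes : P2 ≤ centralizer (P3 : Set G) := by
    have hnorm : P2 ⊔ P1 ≤ normalizer (P3 : Set G) := sup_le hn23 hn13
    rw [hP2]
    exact (gammaInfSub_le_commutator _).trans (commutator_le_centralizer_of_isCyclic hnorm hnorm)
  obtain ⟨p, k, hp, hcard⟩ := h2
  have : Fact p.Prime := ⟨hp⟩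
  have : Finite P2 := Nat.finite_of_card_ne_zero (hcard ▸ pow_ne_zero k hp.ne_zero)
  have : Group.IsNilpotent P2 := (IsPGroup.of_card hcard).isNilpotent
  have : Group.IsNilpotent P3 := by
    let := hcyc.commGroup
    infer_instance
  have : Group.IsNilpotent (P3 ⊔ P2 : Subgroup G) :=
    isNilpotent_sup_of_le_centralizer (le_centralizer_iff.mp hP2_centralizes)
  rw [hP3]
  exact gammaInfSub_eq_bot_of_isNilpotent _

/-- No tower of height 3: if `P₁, P₂, P₃` are subgroups of a finite group `G` of
prime-power order, with `P₁` normalizing `P₂` and `P₃`, `P₂` normalizing `P₃`,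
`P₂ = γ_∞(P₂P₁)`, `P₃ = γ_∞(P₃P₂)` and `P₃` cyclic, then `P₃ = 1`. -/
theorem no_tower_of_height_three_with_cyclic_top
    (G : Type*) [Group G] [Finite G] (P1 P2 P3 : Subgroup G)
    (h1 : ∃ p k : ℕ, p.Prime ∧ Nat.card P1 = p ^ k)
    (h2 : ∃ p k : ℕ, p.Prime ∧ Nat.card P2 = p ^ k)
    (h3 : ∃ p k : ℕ, p.Prime ∧ Nat.card P3 = p ^ k)
    (hn12 : P1 ≤ Subgroup.normalizer (P2 : Set G)) (hn13 : P1 ≤ Subgroup.normalizer (P3 : Set G))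
    (hn23 : P2 ≤ Subgroup.normalizer (P3 : Set G))
    (hP2 : P2 = gammaInfSub (P2 ⊔ P1)) (hP3 : P3 = gammaInfSub (P3 ⊔ P2))
    (hcyc : IsCyclic P3) :
    P3 = ⊥ :=
  no_tower_of_height_three_with_cyclic_top_general G P1 P2 P3 h2 hn13 hn23 hP2 hP3 hcyc
end

section
/- Let G be a profinite group, and let K and K' be infinite procyclic closed normal subgroups of G with K ∩ K' = 1. Suppose a, b ∈ G are such that a centralizes K' and acts on K with [K, ᵢa] of finite index in K for all i, while b centralizes K and acts on K' with [K', ᵢb] of finite index in K' for all i. Then for every n, the subgroup generated by {[x, ₙ(ab)] : x ∈ K × K'} contains a subgroup isomorphic to Z_p ⊕ Z_p; in particular ab admits no procyclic Engel sink. -/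
/-- `S` is an Engel sink of `g`: for every `x` all sufficiently long commutators
`[x, g, ..., g]` lie in `S`. -/
def IsEngelSink {G : Type*} [Group G] (S : Set G) (g : G) : Prop :=
  ∀ x : G, ∃ N : ℕ, ∀ n ≥ N, engel x g n ∈ S

/-- The closed subgroup `[S, a]` topologically generated by the commutators
`[x, a] = x⁻¹a⁻¹xa` with `x ∈ S`. -/
def commSub {G : Type*} [Group G] [TopologicalSpace G] [IsTopologicalGroup G]
    (a : G) (S : Subgroup G) : Subgroup G :=
  (Subgroup.closure {z : G | ∃ x ∈ S, z = x⁻¹ * a⁻¹ * x * a}).topologicalClosure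

/-!
On an abelian normal subgroup `K`, the map `x ↦ [x, g]` is an endomorphism and `[x, ₙ g]` is its
`n`-th iterate. When `b` centralizes `K`, this endomorphism is the same for `g = ab` and `g = a`.
Every endomorphism of `ℤ_p` is multiplication by a scalar, so a nontrivial one is injective, and
`[K, a]` is nontrivial because it has finite index in the infinite group `K`. Hence
`(x, y) ↦ [x, ₙ(ab)] [y, ₙ(ab)]` embeds `K × K' ≅ ℤ_p ⊕ ℤ_p` into the group generated by the
`n`-th Engel commutators.

An Engel sink `S` of `ab` therefore contains nontrivial elements `u ∈ K` and `v ∈ K'`. If the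
closure of `⟨S⟩` were generated by `k`, then in every finite quotient `G/N` both `u` and `v` would
lie in the cyclic group `⟨kN⟩`, where some `uⁱvʲ` with `0 ≤ i, j < p`, not both zero, lies in
`⟨uᵖ, vᵖ⟩`. But for `q`, `r` read off from the `p`-adic valuations of `u` and `v`, the closed
subgroup `K^q K'^r` contains `uᵖ` and `vᵖ` and none of these `uⁱvʲ`, and a small enough `N` keeps
them apart.
-/

open Multiplicative

open scoped IsMulCommutative

namespace PadicInt

variable {p : ℕ} [Fact p.Prime]

theorem addMonoidHom_apply_eq_mul (ψ : ℤ_[p] →+ ℤ_[p]) (x : ℤ_[p]) : ψ x = ψ 1 * x := by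
  set δ : ℤ_[p] →+ ℤ_[p] := ψ - AddMonoidHom.mulLeft (ψ 1)
  have hδ_nsmul : ∀ (m : ℕ) (y : ℤ_[p]), δ (m * y) = m * δ y := fun m y => by
    rw [← nsmul_eq_mul, map_nsmul, nsmul_eq_mul]
  suffices δ x = 0 by simpa [δ, sub_eq_zero] using this
  -- `δ` vanishes on `ℕ` and `x` is a natural number modulo `pⁿ`, so `pⁿ ∣ δ x` for every `n`.
  refine ext_of_toZModPow.mp fun n => ?_
  obtain ⟨c, hc⟩ := Ideal.mem_span_singleton'.mp (appr_spec n x)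
  have hx : x = appr x n * 1 + (p ^ n : ℕ) * c := by push_cast; rw [mul_comm _ c, hc]; ring
  have hδx : δ x = (p ^ n : ℕ) * δ c := by
    rw [hx, map_add, hδ_nsmul, hδ_nsmul]
    simp [δ]
  rw [hδx, map_zero, map_mul, map_natCast, ZMod.natCast_self, zero_mul]

theorem addMonoidHom_injective_of_ne_zero {ψ : ℤ_[p] →+ ℤ_[p]} (hψ : ψ ≠ 0) :
    Function.Injective ψ := by
  have h1 : ψ 1 ≠ 0 := fun h => hψ <| AddMonoidHom.ext fun x => by
    rw [addMonoidHom_apply_eq_mul, h, zero_mul, AddMonoidHom.zero_apply]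
  intro x y hxy
  rw [addMonoidHom_apply_eq_mul ψ x, addMonoidHom_apply_eq_mul ψ y] at hxy
  exact mul_left_cancel₀ h1 hxy

theorem exists_natCast_dvd_prime_mul_not_dvd {t : ℤ_[p]} (ht : t ≠ 0) :
    ∃ q : ℕ, (q : ℤ_[p]) ∣ p * t ∧ ∀ i : ℕ, 0 < i → i < p → ¬ (q : ℤ_[p]) ∣ i * t := by
  obtain ⟨γ, w, rfl⟩ : ∃ (γ : ℕ) (w : ℤ_[p]ˣ), t = w * (p : ℤ_[p]) ^ γ :=
    ⟨_, _, unitCoeff_spec ht⟩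
  refine ⟨p ^ (γ + 1), ⟨w, by push_cast; ring⟩, fun i hi0 hip hdvd => ?_⟩
  have hp : (p : ℤ_[p]) ∣ i := by
    rw [Nat.cast_pow, pow_succ, ← mul_assoc, mul_comm (p ^ γ : ℤ_[p])] at hdvd
    exact Units.dvd_mul_right.mp
      ((mul_dvd_mul_iff_right (pow_ne_zero γ (NeZero.ne (p : ℤ_[p])))).mp hdvd)
  rw [← norm_lt_one_iff_dvd, norm_natCast_lt_one_iff] at hp
  exact absurd (Nat.le_of_dvd hi0 hp) (not_le.mpr hip)

end PadicInt

section MulEquivPadicInt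

variable {p : ℕ} [Fact p.Prime] {M : Type*}

theorem MulEquiv.isMulCommutative {N : Type*} [Mul M] [Mul N] [IsMulCommutative N]
    (e : M ≃* N) : IsMulCommutative M :=
  ⟨⟨fun x y => e.injective (by rw [map_mul, map_mul, mul_comm])⟩⟩

theorem MonoidHom.injective_of_ne_one_of_mulEquiv_padicInt [Group M]
    (e : M ≃* Multiplicative ℤ_[p]) {F : M →* M} (hF : F ≠ 1) : Function.Injective F := by
  set ψ : ℤ_[p] →+ ℤ_[p] :=
    AddMonoidHom.toMultiplicative.symm (e.toMonoidHom.comp (F.comp e.symm.toMonoidHom))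
  have hψ : ψ ≠ 0 := fun h => hF <| MonoidHom.ext fun x => e.injective <| toAdd.injective <| by
    simpa [ψ] using DFunLike.congr_fun h (e x).toAdd
  intro x y hxy
  apply e.injective
  apply toAdd.injective
  apply PadicInt.addMonoidHom_injective_of_ne_zero hψ
  simp [ψ, hxy]

variable [CommGroup M]

theorem mem_range_powMonoidHom_iff_of_mulEquiv_padicInt (e : M ≃* Multiplicative ℤ_[p])
    (q : ℕ) (x : M) :
    x ∈ (powMonoidHom q : M →* M).range ↔ (q : ℤ_[p]) ∣ (e x).toAdd := by
  constructor
  · rintro ⟨y, rfl⟩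
    exact ⟨(e y).toAdd, by simp [nsmul_eq_mul]⟩
  · rintro ⟨c, hc⟩
    refine ⟨e.symm (ofAdd c), e.injective (toAdd.injective ?_)⟩
    simp [nsmul_eq_mul, hc]

theorem exists_pow_prime_mem_range_powMonoidHom (e : M ≃* Multiplicative ℤ_[p]) {u : M}
    (hu : u ≠ 1) :
    ∃ q : ℕ, u ^ p ∈ (powMonoidHom q : M →* M).range ∧
      ∀ i, 0 < i → i < p → u ^ i ∉ (powMonoidHom q : M →* M).range := by
  have ht : (e u).toAdd ≠ 0 := by simpa using hu
  obtain ⟨q, hq, hq'⟩ := PadicInt.exists_natCast_dvd_prime_mul_not_dvd ht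
  refine ⟨q, ?_, fun i hi hip => ?_⟩ <;>
    simp [mem_range_powMonoidHom_iff_of_mulEquiv_padicInt e, nsmul_eq_mul, *]

end MulEquivPadicInt

theorem Int.exists_mul_add_mul_eq_prime_mul {p : ℕ} (hp : p.Prime) (m l : ℤ) :
    ∃ i j : ℕ, i < p ∧ j < p ∧ (i ≠ 0 ∨ j ≠ 0) ∧
      ∃ x y : ℤ, i * m + j * l = p * (m * x + l * y) := by
  have := Fact.mk hp
  rcases (Int.gcd m l).eq_zero_or_pos with h0 | hpos
  · obtain ⟨rfl, rfl⟩ := Int.gcd_eq_zero_iff.mp h0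
    exact ⟨1, 0, hp.one_lt, hp.pos, Or.inl one_ne_zero, 0, 0, by ring⟩
  obtain ⟨m', l', hcop, hm, hl⟩ := Int.exists_gcd_one hpos
  -- `(i, j) ≡ (l', -m') mod p` solves `i m' + j l' ≡ 0`, and is nonzero as `m'`, `l'` are coprime.
  set i := (l' : ZMod p).val
  set j := (-m' : ZMod p).val
  obtain ⟨c, hc⟩ : (p : ℤ) ∣ i * m' + j * l' := by
    rw [← ZMod.intCast_zmod_eq_zero_iff_dvd]
    push_cast
    simp only [i, j, ZMod.natCast_val, ZMod.cast_id', id]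
    ring
  refine ⟨i, j, ZMod.val_lt _, ZMod.val_lt _, ?_, c * m.gcdA l, c * m.gcdB l, ?_⟩
  · by_contra! h
    have hl' : (p : ℤ) ∣ l' := (ZMod.intCast_zmod_eq_zero_iff_dvd _ _).mp
      ((ZMod.val_eq_zero _).mp h.1)
    have hm' : (p : ℤ) ∣ m' := (ZMod.intCast_zmod_eq_zero_iff_dvd _ _).mp
      (neg_eq_zero.mp ((ZMod.val_eq_zero _).mp h.2))
    have := Int.dvd_gcd hm' hl'
    rw [hcop] at this
    exact hp.not_dvd_one (by exact_mod_cast this)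
  · calc (i : ℤ) * m + j * l = (i * m' + j * l') * m.gcd l := by
          linear_combination (i : ℤ) * hm + (j : ℤ) * hl
      _ = p * (m * (c * m.gcdA l) + l * (c * m.gcdB l)) := by
          rw [hc, Int.gcd_eq_gcd_ab]; ring

theorem exists_pow_mul_pow_mem_closure_pow_of_mem_zpowers {Q : Type*} [Group Q] {p : ℕ}
    (hp : p.Prime) {c u v : Q} (hu : u ∈ Subgroup.zpowers c) (hv : v ∈ Subgroup.zpowers c) :
    ∃ i j : ℕ, i < p ∧ j < p ∧ (i ≠ 0 ∨ j ≠ 0) ∧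
      u ^ i * v ^ j ∈ Subgroup.closure {u ^ p, v ^ p} := by
  obtain ⟨m, rfl⟩ := Subgroup.mem_zpowers_iff.mp hu
  obtain ⟨l, rfl⟩ := Subgroup.mem_zpowers_iff.mp hv
  obtain ⟨i, j, hi, hj, hij, x, y, hxy⟩ := Int.exists_mul_add_mul_eq_prime_mul hp m l
  refine ⟨i, j, hi, hj, hij, ?_⟩
  have h : (c ^ m) ^ i * (c ^ l) ^ j = ((c ^ m) ^ p) ^ x * ((c ^ l) ^ p) ^ y := by
    simp only [← zpow_natCast, ← zpow_mul, ← zpow_add]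
    congr 1
    linear_combination hxy
  rw [h]
  exact mul_mem (zpow_mem (Subgroup.subset_closure (by simp)) x)
    (zpow_mem (Subgroup.subset_closure (by simp)) y)

section Profinite

variable {G : Type*} [Group G] [TopologicalSpace G] [IsTopologicalGroup G]

theorem QuotientGroup.mk_mem_zpowers_of_mem_topologicalClosure {N : Subgroup G} [N.Normal]
    (hN : IsOpen (N : Set G)) {k h : G} (hh : h ∈ (Subgroup.closure {k}).topologicalClosure) :
    (h : G ⧸ N) ∈ Subgroup.zpowers (k : G ⧸ N) := by
  set L := (Subgroup.zpowers (k : G ⧸ N)).comap (QuotientGroup.mk' N)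
  have hNL : N ≤ L := fun n hn => by
    simp [L, (QuotientGroup.eq_one_iff n).mpr hn]
  have hL : IsClosed (L : Set G) := L.isClosed_of_isOpen (Subgroup.isOpen_mono hNL hN)
  have hkL : Subgroup.closure {k} ≤ L :=
    (Subgroup.closure_le L).mpr (by simp [L, Subgroup.mem_zpowers])
  exact Subgroup.topologicalClosure_minimal _ hkL hL hh

theorem exists_openNormalSubgroup_forall_mk_notMem_map [CompactSpace G]
    [TotallyDisconnectedSpace G] {P : Subgroup G} (hP : IsClosed (P : Set G)) {ι : Type*}
    (s : Finset ι) (f : ι → G) (hf : ∀ i ∈ s, f i ∉ P) :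
    ∃ N : OpenNormalSubgroup G, ∀ i ∈ s,
      (f i : G ⧸ (N : Subgroup G)) ∉ P.map (QuotientGroup.mk' (N : Subgroup G)) := by
  set V : Set G := ⋂ i ∈ s, (f i * ·) ⁻¹' (P : Set G)ᶜ
  have hV : IsOpen V := isOpen_biInter_finset fun i _ =>
    hP.isOpen_compl.preimage (continuous_const_mul (f i))
  have h1V : (1 : G) ∈ V := by simpa [V] using hf
  obtain ⟨N, hNV⟩ := ProfiniteGrp.exist_openNormalSubgroup_sub_open_nhds_of_one hV h1V
  refine ⟨N, fun i hi ⟨q, hq, hqf⟩ => ?_⟩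
  have hn : (f i)⁻¹ * q ∈ (N : Subgroup G) :=
    inv_mem_iff.mp (by simpa using QuotientGroup.eq.mp hqf)
  exact Set.mem_iInter₂.mp (hNV hn) i hi (by simpa using hq)

theorem exists_pow_mul_pow_mem_of_mem_topologicalClosure [CompactSpace G]
    [TotallyDisconnectedSpace G] {p : ℕ} (hp : p.Prime) {k u v : G}
    (hu : u ∈ (Subgroup.closure {k}).topologicalClosure)
    (hv : v ∈ (Subgroup.closure {k}).topologicalClosure)
    {P : Subgroup G} (hP : IsClosed (P : Set G)) (hup : u ^ p ∈ P) (hvp : v ^ p ∈ P) :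
    ∃ i j : ℕ, i < p ∧ j < p ∧ (i ≠ 0 ∨ j ≠ 0) ∧ u ^ i * v ^ j ∈ P := by
  by_contra! h
  set s := (Finset.range p ×ˢ Finset.range p).filter (· ≠ (0, 0))
  have hs : ∀ {i j : ℕ}, (i, j) ∈ s ↔ i < p ∧ j < p ∧ (i ≠ 0 ∨ j ≠ 0) := by
    intro i j
    simp only [s, Finset.mem_filter, Finset.mem_product, Finset.mem_range, ne_eq, Prod.mk.injEq,
      not_and_or, and_assoc]
  obtain ⟨N, hN⟩ := exists_openNormalSubgroup_forall_mk_notMem_map hP s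
    (fun ij => u ^ ij.1 * v ^ ij.2) fun ⟨i, j⟩ hij => by
      obtain ⟨hi, hj, hij⟩ := hs.mp hij
      exact h i j hi hj hij
  set π := QuotientGroup.mk' (N : Subgroup G)
  obtain ⟨i, j, hi, hj, hij, hmem⟩ := exists_pow_mul_pow_mem_closure_pow_of_mem_zpowers hp
    (QuotientGroup.mk_mem_zpowers_of_mem_topologicalClosure N.isOpen' hu)
    (QuotientGroup.mk_mem_zpowers_of_mem_topologicalClosure N.isOpen' hv)
  have hcl : Subgroup.closure {π u ^ p, π v ^ p} ≤ P.map π := by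
    rw [Subgroup.closure_le, Set.insert_subset_iff, Set.singleton_subset_iff]
    exact ⟨⟨_, hup, map_pow π u p⟩, ⟨_, hvp, map_pow π v p⟩⟩
  exact hN (i, j) (hs.mpr ⟨hi, hj, hij⟩) (by simpa [π] using hcl hmem)

end Profinite

section CommutatorHom

variable {G : Type*} [Group G] (K : Subgroup G) [K.Normal] [IsMulCommutative K]

def commutatorHom (g : G) : K →* K :=
  (MonoidHom.id K)⁻¹ * ((MulAut.conjNormal g)⁻¹ : MulAut K).toMonoidHom

variable {K}

@[simp]
theorem coe_commutatorHom_apply (g : G) (x : K) :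
    (commutatorHom K g x : G) = (x : G)⁻¹ * g⁻¹ * x * g := by
  simp [commutatorHom, mul_assoc]

theorem engel_eq_coe_iterate_commutatorHom (g : G) (x : K) (n : ℕ) :
    engel (x : G) g n = ((commutatorHom K g)^[n] x : G) := by
  induction n with
  | zero => rfl
  | succ n ih => rw [Function.iterate_succ_apply', coe_commutatorHom_apply, ← ih]; rfl

theorem commutatorHom_mul_eq_left {a b : G} (hb : ∀ x ∈ K, b * x = x * b) :
    commutatorHom K (a * b) = commutatorHom K a := by
  ext x
  have hconj : a⁻¹ * x * a ∈ K := by simpa using ‹K.Normal›.conj_mem _ x.2 a⁻¹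
  simp only [coe_commutatorHom_apply]
  calc (x : G)⁻¹ * (a * b)⁻¹ * x * (a * b) = (x : G)⁻¹ * (b⁻¹ * ((a⁻¹ * x * a) * b)) := by group
    _ = (x : G)⁻¹ * a⁻¹ * x * a := by rw [← hb _ hconj]; group

theorem commutatorHom_mul_eq_right {a b : G} (ha : ∀ x ∈ K, a * x = x * a) :
    commutatorHom K (a * b) = commutatorHom K b := by
  ext x
  simp only [coe_commutatorHom_apply]
  calc (x : G)⁻¹ * (a * b)⁻¹ * x * (a * b) = (x : G)⁻¹ * b⁻¹ * (a⁻¹ * (x * a)) * b := by group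
    _ = (x : G)⁻¹ * b⁻¹ * x * b := by rw [← ha _ x.2]; group

theorem commutatorHom_ne_one [TopologicalSpace G] [IsTopologicalGroup G] [T1Space G]
    [Infinite K] {g : G} (h : (commSub g K).relIndex K ≠ 0) : commutatorHom K g ≠ 1 := by
  intro h1
  have hbot : commSub g K ≤ ⊥ := by
    refine Subgroup.topologicalClosure_minimal _ ((Subgroup.closure_le _).mpr ?_) ?_
    · rintro _ ⟨x, hx, rfl⟩
      simpa using congrArg Subtype.val (DFunLike.congr_fun h1 ⟨x, hx⟩)
    · simp
  rw [le_bot_iff.mp hbot, Subgroup.relIndex_bot_left, Nat.card_eq_zero_of_infinite] at h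
  exact h rfl

theorem injective_commutatorHom_of_relIndex_ne_zero [TopologicalSpace G] [IsTopologicalGroup G]
    [T1Space G] {p : ℕ} [Fact p.Prime] (e : K ≃* Multiplicative ℤ_[p]) {g : G}
    (h : (commSub g K).relIndex K ≠ 0) : Function.Injective (commutatorHom K g) :=
  have : Infinite K := Infinite.of_injective _ e.symm.injective
  MonoidHom.injective_of_ne_one_of_mulEquiv_padicInt e (commutatorHom_ne_one h)

end CommutatorHom

section DirectProduct

variable {G : Type*} [Group G] {K K' : Subgroup G} [K.Normal] [K'.Normal]

def Subgroup.mulProdHom (hdisj : K ⊓ K' = ⊥) : K × K' →* G :=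
  K.subtype.noncommCoprod K'.subtype fun x y =>
    Subgroup.commute_of_normal_of_disjoint K K' ‹_› ‹_› (disjoint_iff.mpr hdisj) x y x.2 y.2

@[simp]
theorem Subgroup.mulProdHom_apply (hdisj : K ⊓ K' = ⊥) (x : K) (y : K') :
    Subgroup.mulProdHom hdisj (x, y) = x * y := rfl

theorem Subgroup.mulProdHom_injective (hdisj : K ⊓ K' = ⊥) :
    Function.Injective (Subgroup.mulProdHom hdisj) := by
  refine (MonoidHom.noncommCoprod_injective _ _ _).mpr
    ⟨Subtype.val_injective, Subtype.val_injective, ?_⟩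
  simpa [disjoint_iff] using hdisj

theorem exists_le_closure_engel_mulEquiv_prod [IsMulCommutative K] [IsMulCommutative K']
    (hdisj : K ⊓ K' = ⊥) {g : G} (hK : Function.Injective (commutatorHom K g))
    (hK' : Function.Injective (commutatorHom K' g)) (n : ℕ) :
    ∃ W : Subgroup G, W ≤ Subgroup.closure {z : G | ∃ x ∈ K ⊔ K', z = engel x g n} ∧
      Nonempty (W ≃* K × K') := by
  -- `Monoid.End` is needed so that `^ n` means iteration, not the pointwise power.
  let F : Monoid.End K := commutatorHom K g
  let F' : Monoid.End K' := commutatorHom K' g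
  set Φ := (Subgroup.mulProdHom hdisj).comp ((F ^ n).prodMap (F' ^ n))
  have hΦ : Function.Injective Φ :=
    (Subgroup.mulProdHom_injective hdisj).comp ((hK.iterate n).prodMap (hK'.iterate n))
  refine ⟨Φ.range, ?_, ⟨(MonoidHom.ofInjective hΦ).symm⟩⟩
  rintro _ ⟨⟨x, y⟩, rfl⟩
  have hx : engel (x : G) g n = ((F ^ n) x : G) := by
    rw [engel_eq_coe_iterate_commutatorHom, Monoid.End.coe_pow]; rfl
  have hy : engel (y : G) g n = ((F' ^ n) y : G) := by
    rw [engel_eq_coe_iterate_commutatorHom, Monoid.End.coe_pow]; rfl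
  exact mul_mem (Subgroup.subset_closure ⟨x, Subgroup.mem_sup_left x.2, hx.symm⟩)
    (Subgroup.subset_closure ⟨y, Subgroup.mem_sup_right y.2, hy.symm⟩)

theorem not_isProcyclic_of_mulEquiv_padicInt [TopologicalSpace G] [IsTopologicalGroup G]
    [CompactSpace G] [T2Space G] [TotallyDisconnectedSpace G] {p : ℕ} [Fact p.Prime]
    (hKc : IsClosed (K : Set G)) (hK'c : IsClosed (K' : Set G)) (hdisj : K ⊓ K' = ⊥)
    (e : K ≃* Multiplicative ℤ_[p]) (e' : K' ≃* Multiplicative ℤ_[p]) {H : Subgroup G}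
    {u : K} {v : K'} (hu : u ≠ 1) (hv : v ≠ 1) (huH : (u : G) ∈ H) (hvH : (v : G) ∈ H) :
    ¬ IsProcyclic H := by
  rintro ⟨k, rfl⟩
  have := e.isMulCommutative
  have := e'.isMulCommutative
  have : CompactSpace K := isCompact_iff_compactSpace.mp hKc.isCompact
  have : CompactSpace K' := isCompact_iff_compactSpace.mp hK'c.isCompact
  obtain ⟨q, huq, huq'⟩ := exists_pow_prime_mem_range_powMonoidHom e hu
  obtain ⟨r, hvr, hvr'⟩ := exists_pow_prime_mem_range_powMonoidHom e' hv
  set ρ := (Subgroup.mulProdHom hdisj).comp ((powMonoidHom q).prodMap (powMonoidHom r))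
  have hρ : Continuous ρ := by
    change Continuous fun xy : K × K' => ((xy.1 ^ q : K) : G) * ((xy.2 ^ r : K') : G)
    fun_prop
  obtain ⟨i, j, hi, hj, hij, ⟨x, y⟩, hxy⟩ := exists_pow_mul_pow_mem_of_mem_topologicalClosure
    (Fact.out : p.Prime) huH hvH (P := ρ.range) (isCompact_range hρ).isClosed
    (by obtain ⟨x, hx⟩ := huq; exact ⟨(x, 1), by simpa [ρ] using congrArg Subtype.val hx⟩)
    (by obtain ⟨y, hy⟩ := hvr; exact ⟨(1, y), by simpa [ρ] using congrArg Subtype.val hy⟩)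
  obtain ⟨hx, hy⟩ := Prod.mk.inj <| Subgroup.mulProdHom_injective hdisj
    (a₁ := (x ^ q, y ^ r)) (a₂ := (u ^ i, v ^ j)) (by simpa [ρ] using hxy)
  rcases hij with hi0 | hj0
  · exact huq' i (Nat.pos_of_ne_zero hi0) hi ⟨x, hx⟩
  · exact hvr' j (Nat.pos_of_ne_zero hj0) hj ⟨y, hy⟩

end DirectProduct

/-- Let `G` be a profinite group with infinite procyclic closed normal subgroups
`K ≅ ℤ_p` and `K' ≅ ℤ_p` with `K ∩ K' = 1`.  Suppose `a` centralizes `K'` and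
`[K, ᵢa]` has finite index in `K` for all `i ≥ 1`, while `b` centralizes `K` and
`[K', ᵢb]` has finite index in `K'` for all `i ≥ 1`.  Then for every `n` the subgroup
generated by the commutators `[x, ₙ(ab)]`, `x ∈ K ⊔ K'`, contains a subgroup
isomorphic to `ℤ_p ⊕ ℤ_p`; in particular `ab` admits no Engel sink generating a
procyclic subgroup. -/
theorem engel_subgroup_contains_Zp_sum
    (p : ℕ) [Fact p.Prime] (G : Type*) [Group G] [TopologicalSpace G]
    [IsTopologicalGroup G] [CompactSpace G] [T2Space G] [TotallyDisconnectedSpace G]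
    (K K' : Subgroup G) (hKn : K.Normal) (hK'n : K'.Normal)
    (hKclosed : IsClosed (K : Set G)) (hK'closed : IsClosed (K' : Set G))
    (hKiso : Nonempty (K ≃* Multiplicative ℤ_[p]))
    (hK'iso : Nonempty (K' ≃* Multiplicative ℤ_[p]))
    (hdisj : K ⊓ K' = ⊥)
    (a b : G)
    (haK' : ∀ x ∈ K', a * x = x * a)
    (hbK : ∀ x ∈ K, b * x = x * b)
    (haK : ∀ i : ℕ, 1 ≤ i → ((commSub a)^[i] K).relIndex K ≠ 0)
    (hbK' : ∀ i : ℕ, 1 ≤ i → ((commSub b)^[i] K').relIndex K' ≠ 0) :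
    (∀ n : ℕ, ∃ W : Subgroup G,
        W ≤ Subgroup.closure {z : G | ∃ x ∈ K ⊔ K', z = engel x (a * b) n} ∧
        Nonempty (W ≃* Multiplicative (ℤ_[p] × ℤ_[p]))) ∧
      ∀ S : Set G, IsEngelSink S (a * b) →
        ¬ IsProcyclic ((Subgroup.closure S).topologicalClosure) := by
  obtain ⟨e⟩ := hKiso
  obtain ⟨e'⟩ := hK'iso
  have := e.isMulCommutative
  have := e'.isMulCommutative
  have hF : Function.Injective (commutatorHom K (a * b)) := by
    rw [commutatorHom_mul_eq_left hbK]
    exact injective_commutatorHom_of_relIndex_ne_zero e (by simpa using haK 1 le_rfl)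
  have hF' : Function.Injective (commutatorHom K' (a * b)) := by
    rw [commutatorHom_mul_eq_right haK']
    exact injective_commutatorHom_of_relIndex_ne_zero e' (by simpa using hbK' 1 le_rfl)
  refine ⟨fun n => ?_, fun S hS => ?_⟩
  · obtain ⟨W, hW, ⟨f⟩⟩ := exists_le_closure_engel_mulEquiv_prod hdisj hF hF' n
    exact ⟨W, hW, ⟨f.trans ((e.prodCongr e').trans (MulEquiv.prodMultiplicative _ _).symm)⟩⟩
  set x : K := e.symm (ofAdd 1)
  set x' : K' := e'.symm (ofAdd 1)
  obtain ⟨N, hN⟩ := hS x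
  obtain ⟨N', hN'⟩ := hS x'
  refine not_isProcyclic_of_mulEquiv_padicInt hKclosed hK'closed hdisj e e'
    (u := (commutatorHom K (a * b))^[N] x) (v := (commutatorHom K' (a * b))^[N'] x') ?_ ?_ ?_ ?_
  · simpa [iterate_map_one] using (hF.iterate N).ne (a₂ := 1) (by simp [x])
  · simpa [iterate_map_one] using (hF'.iterate N').ne (a₂ := 1) (by simp [x'])
  · rw [← engel_eq_coe_iterate_commutatorHom]
    exact Subgroup.le_topologicalClosure _ (Subgroup.subset_closure (hN N le_rfl))
  · rw [← engel_eq_coe_iterate_commutatorHom]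
    exact Subgroup.le_topologicalClosure _ (Subgroup.subset_closure (hN' N' le_rfl))
end
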